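/- (Lemma 1, mixing degradation) Let H_k, k = 0,1,…, be row-stochastic matrices such that for some L ∈ ℕ and μ > 0, τ₁(H_{k+L−1}⋯H_k) ≤ 1 − μ for all k. Let σ_{i,k} ∈ (0,1] with σ̌ = inf_{i,k} σ_{i,k} > 0, let Σ_k = diag(σ_{1,k},…,σ_{n,k}), and define H_k^σ = I − Σ_k + Σ_k H_k. Then for all k, τ₁(H_{k+L−1}^σ ⋯ H_k^σ) ≤ 1 − σ̌^L μ. -/

import Mathlib

/-- row-stochastic matrix -/
def RowStochastic {n : ℕ} (A : Matrix (Fin n) (Fin n) ℝ) : Prop :=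
  (∀ i j, 0 ≤ A i j) ∧ (∀ i, ∑ j, A i j = 1)

/-- coefficient of ergodicity -/
noncomputable def tau1 {n : ℕ} (A : Matrix (Fin n) (Fin n) ℝ) : ℝ :=
  (1/2) * ⨆ p : Fin n × Fin n, ∑ s, |A p.1 s - A p.2 s|

/-- the ordered backward product H_{k+L-1} ⋯ H_{k+1} H_k -/
noncomputable def backProd {n : ℕ} (H : ℕ → Matrix (Fin n) (Fin n) ℝ) (k L : ℕ) :
    Matrix (Fin n) (Fin n) ℝ :=
  (List.ofFn (fun ℓ : Fin L => H (k + (L - 1 - ℓ.val)))).prod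

/-!
Write `Hσ = diag(1 - σ) + diag σ * H`. Since `1 - σ ≥ 0`, every entry of `Hσ` dominates
`σ̌` times the corresponding entry of `H`, so the `L`-fold product dominates `σ̌ ^ L` times the
product of the `H`. For a row-stochastic matrix `τ₁(A) = 1 - min_{i,j} ∑ₛ min(A_{is}, A_{js})`,
and the overlaps `∑ₛ min(A_{is}, A_{js})` only grow under entrywise domination, so the overlaps of
the lazy product are at least `σ̌ ^ L μ`.
-/

open Matrix

namespace RowStochastic

variable {n : ℕ}

lemma one : RowStochastic (1 : Matrix (Fin n) (Fin n) ℝ) :=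
  ⟨fun i j => by rw [one_apply]; split_ifs <;> norm_num, fun i => by simp [one_apply]⟩

lemma mul {A B : Matrix (Fin n) (Fin n) ℝ} (hA : RowStochastic A) (hB : RowStochastic B) :
    RowStochastic (A * B) := by
  refine ⟨fun i j => ?_, fun i => ?_⟩
  · rw [mul_apply]
    exact Finset.sum_nonneg fun s _ => mul_nonneg (hA.1 i s) (hB.1 s j)
  · simp only [mul_apply]
    rw [Finset.sum_comm]
    simp_rw [← Finset.mul_sum, hB.2, mul_one, hA.2]

lemma list_prod {l : List (Matrix (Fin n) (Fin n) ℝ)} (hl : ∀ A ∈ l, RowStochastic A) :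
    RowStochastic l.prod := by
  induction l with
  | nil => exact one
  | cons A l ih =>
    rw [List.forall_mem_cons] at hl
    exact hl.1.mul (ih hl.2)

lemma diagonal_add_diagonal_mul {σ : Fin n → ℝ} (hσ₀ : ∀ i, 0 ≤ σ i) (hσ₁ : ∀ i, σ i ≤ 1)
    {H : Matrix (Fin n) (Fin n) ℝ} (hH : RowStochastic H) :
    RowStochastic (diagonal (fun i => 1 - σ i) + diagonal σ * H) := by
  refine ⟨fun i j => ?_, fun i => ?_⟩
  · simp only [Matrix.add_apply, diagonal_mul, diagonal_apply]
    have := mul_nonneg (hσ₀ i) (hH.1 i j)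
    split_ifs <;> linarith [hσ₁ i]
  · simp only [Matrix.add_apply, diagonal_mul, Finset.sum_add_distrib, ← Finset.mul_sum, hH.2,
      diagonal_apply, Finset.sum_ite_eq, Finset.mem_univ, if_true]
    ring

end RowStochastic

lemma one_sub_diagonal {n : ℕ} (σ : Fin n → ℝ) :
    (1 : Matrix (Fin n) (Fin n) ℝ) - diagonal σ = diagonal (fun i => 1 - σ i) := by
  rw [← diagonal_one, diagonal_sub]

lemma backProd_succ {n : ℕ} (H : ℕ → Matrix (Fin n) (Fin n) ℝ) (k L : ℕ) :
    backProd H k (L + 1) = H (k + L) * backProd H k L := by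
  simp only [backProd, List.ofFn_succ, List.prod_cons, Fin.val_zero, Fin.val_succ]
  congr 3
  funext ℓ
  congr 2
  omega

lemma backProd_rowStochastic {n : ℕ} {H : ℕ → Matrix (Fin n) (Fin n) ℝ}
    (hH : ∀ m, RowStochastic (H m)) (k L : ℕ) : RowStochastic (backProd H k L) :=
  RowStochastic.list_prod fun A hA => by
    obtain ⟨ℓ, rfl⟩ := List.mem_ofFn.1 hA
    exact hH _

lemma pow_mul_backProd_apply_le {n : ℕ} {H H' : ℕ → Matrix (Fin n) (Fin n) ℝ} {c : ℝ}
    (hc : 0 ≤ c) (hH : ∀ m, RowStochastic (H m)) (hle : ∀ m i j, c * H m i j ≤ H' m i j)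
    (k L : ℕ) (i j : Fin n) : c ^ L * backProd H k L i j ≤ backProd H' k L i j := by
  induction L generalizing i j with
  | zero => simp [backProd]
  | succ L ih =>
    simp only [backProd_succ, mul_apply, Finset.mul_sum]
    refine Finset.sum_le_sum fun s _ => ?_
    calc c ^ (L + 1) * (H (k + L) i s * backProd H k L s j)
        = (c * H (k + L) i s) * (c ^ L * backProd H k L s j) := by ring
      _ ≤ H' (k + L) i s * backProd H' k L s j :=
        mul_le_mul (hle _ i s) (ih s j)
          (mul_nonneg (pow_nonneg hc L) ((backProd_rowStochastic hH k L).1 s j))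
          ((mul_nonneg hc ((hH _).1 i s)).trans (hle _ i s))

lemma sum_abs_sub_eq_two_sub_two_mul_sum_min {ι : Type*} [Fintype ι] {a b : ι → ℝ}
    (ha : ∑ s, a s = 1) (hb : ∑ s, b s = 1) :
    ∑ s, |a s - b s| = 2 - 2 * ∑ s, min (a s) (b s) := by
  have habs : ∀ s, |a s - b s| = a s + b s - 2 * min (a s) (b s) := fun s => by
    rw [← max_sub_min_eq_abs']
    linarith [min_add_max (a s) (b s)]
  simp only [habs, Finset.sum_sub_distrib, Finset.sum_add_distrib, ha, hb, ← Finset.mul_sum]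
  ring

lemma tau1_le_one_sub_iff {n : ℕ} (hn : 0 < n) {A : Matrix (Fin n) (Fin n) ℝ}
    (hA : RowStochastic A) (m : ℝ) :
    tau1 A ≤ 1 - m ↔ ∀ i j, m ≤ ∑ s, min (A i s) (A j s) := by
  have : Nonempty (Fin n × Fin n) := ⟨(⟨0, hn⟩, ⟨0, hn⟩)⟩
  simp only [tau1, sum_abs_sub_eq_two_sub_two_mul_sum_min (hA.2 _) (hA.2 _)]
  rw [← le_div_iff₀' (by norm_num), ciSup_le_iff (Set.finite_range _).bddAbove, Prod.forall]
  refine forall₂_congr fun i j => ?_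
  constructor <;> intro h <;> linarith

lemma mul_le_diagonal_add_diagonal_mul_apply {n : ℕ} {σ : Fin n → ℝ} {c : ℝ}
    (hσ₁ : ∀ i, σ i ≤ 1) (hc : ∀ i, c ≤ σ i) {H : Matrix (Fin n) (Fin n) ℝ}
    (hH : RowStochastic H) (i j : Fin n) :
    c * H i j ≤ (diagonal (fun i => 1 - σ i) + diagonal σ * H) i j := by
  simp only [Matrix.add_apply, diagonal_mul, diagonal_apply]
  have := mul_le_mul_of_nonneg_right (hc i) (hH.1 i j)
  split_ifs <;> linarith [hσ₁ i]

theorem mixing_degradation_general {n : ℕ} (hn : 0 < n)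
    (H : ℕ → Matrix (Fin n) (Fin n) ℝ) (hH : ∀ k, RowStochastic (H k))
    (L : ℕ) (μ : ℝ)
    (hmix : ∀ k, tau1 (backProd H k L) ≤ 1 - μ)
    (σ : Fin n → ℕ → ℝ) (hσ : ∀ i k, σ i k ∈ Set.Ioc (0:ℝ) 1)
    (σc : ℝ) (hσc : 0 < σc) (hσcle : ∀ i k, σc ≤ σ i k)
    (Hσ : ℕ → Matrix (Fin n) (Fin n) ℝ)
    (hHσ : ∀ k, Hσ k = 1 - Matrix.diagonal (fun i => σ i k)
        + Matrix.diagonal (fun i => σ i k) * H k) :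
    ∀ k, tau1 (backProd Hσ k L) ≤ 1 - σc ^ L * μ := by
  intro k
  have hσ₁ : ∀ m i, σ i m ≤ 1 := fun m i => (hσ i m).2
  have hHσ' : ∀ m, Hσ m = diagonal (fun i => 1 - σ i m) + diagonal (fun i => σ i m) * H m :=
    fun m => by rw [hHσ, one_sub_diagonal]
  have hHσ_rs : ∀ m, RowStochastic (Hσ m) := fun m =>
    hHσ' m ▸ (hH m).diagonal_add_diagonal_mul (fun i => (hσ i m).1.le) (hσ₁ m)
  have hdom : ∀ m i j, σc * H m i j ≤ Hσ m i j := fun m =>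
    hHσ' m ▸ mul_le_diagonal_add_diagonal_mul_apply (hσ₁ m) (fun i => hσcle i m) (hH m)
  set P := backProd H k L
  rw [tau1_le_one_sub_iff hn (backProd_rowStochastic hHσ_rs k L)]
  intro i j
  have hP := (tau1_le_one_sub_iff hn (backProd_rowStochastic hH k L) μ).1 (hmix k) i j
  have hc : 0 ≤ σc ^ L := pow_nonneg hσc.le L
  calc σc ^ L * μ ≤ σc ^ L * ∑ s, min (P i s) (P j s) := mul_le_mul_of_nonneg_left hP hc
    _ = ∑ s, min (σc ^ L * P i s) (σc ^ L * P j s) := by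
      simp only [Finset.mul_sum, mul_min_of_nonneg _ _ hc]
    _ ≤ _ := Finset.sum_le_sum fun s _ => min_le_min
      (pow_mul_backProd_apply_le hσc.le hH hdom k L i s)
      (pow_mul_backProd_apply_le hσc.le hH hdom k L j s)

/-- Lemma 1, mixing degradation:
if τ₁(H_{k+L−1}⋯H_k) ≤ 1 − μ for all k, then with H_k^σ = I − Σ_k + Σ_k H_k and
σ̌ = inf σ_{i,k} > 0, τ₁(H_{k+L−1}^σ⋯H_k^σ) ≤ 1 − σ̌^L μ for all k. -/
theorem mixing_degradation {n : ℕ} (hn : 0 < n)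
    (H : ℕ → Matrix (Fin n) (Fin n) ℝ) (hH : ∀ k, RowStochastic (H k))
    (L : ℕ) (hL : 1 ≤ L) (μ : ℝ) (hμ : 0 < μ)
    (hmix : ∀ k, tau1 (backProd H k L) ≤ 1 - μ)
    (σ : Fin n → ℕ → ℝ) (hσ : ∀ i k, σ i k ∈ Set.Ioc (0:ℝ) 1)
    (σc : ℝ) (hσc : 0 < σc) (hσcle : ∀ i k, σc ≤ σ i k)
    (hσcinf : ∀ ε > 0, ∃ i k, σ i k < σc + ε)
    (Hσ : ℕ → Matrix (Fin n) (Fin n) ℝ)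
    (hHσ : ∀ k, Hσ k = 1 - Matrix.diagonal (fun i => σ i k)
        + Matrix.diagonal (fun i => σ i k) * H k) :
    ∀ k, tau1 (backProd Hσ k L) ≤ 1 - σc ^ L * μ :=
  mixing_degradation_general hn H hH L μ hmix σ hσ σc hσc hσcle Hσ hHσ
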